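/- Lower bound for the Leray denominator Φ on the convex configuration (inequality (3.24)-type consequence of (3.13)): Under the hypotheses of the Leray support-function inequality — n ≥ 1, 1 ≤ q ≤ n, λ₁, …, λ_{q−1} ∈ [−1,1], R : ℂⁿ → ℝ a C² function whose value, first derivative and second derivative all vanish at the origin, ρ(z) = −Im z_n + Σ_{j=1}^{q−1} λ_j |z_j|² + Σ_{j=q}^{n} |z_j|² + R(z), g_j(z,ζ) = (∂ρ/∂ζ_j)(ζ) + (conj ζ_j − conj z_j) for j < q and g_j(z,ζ) = (∂ρ/∂ζ_j)(ζ) for j ≥ q — there is a neighborhood U of 0 in ℂⁿ such that for all z, ζ ∈ U with ρ(z) ≤ 0 ≤ ρ(ζ), the quantity Φ(z, ζ) = Σ_{j=1}^{n} g_j(z, ζ)(ζ_j − z_j) satisfies |Φ(z, ζ)| ≥ (1/2)(ρ(ζ) − ρ(z)) + (1/4)|ζ − z|². -/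

import Mathlib

open Complex

/-- The Wirtinger derivative `∂ρ/∂ζ_j = ½(∂ρ/∂x_j − i ∂ρ/∂y_j)` of a real-valued
function `ρ` on `ℂⁿ` at `ζ`, in the `j`-th coordinate. -/
noncomputable def wderiv (n : ℕ) (ρ : EuclideanSpace ℂ (Fin n) → ℝ)
    (ζ : EuclideanSpace ℂ (Fin n)) (j : Fin n) : ℂ :=
  (1 / 2 : ℂ) *
    ((fderiv ℝ ρ ζ (EuclideanSpace.single j 1) : ℂ) -
      Complex.I * (fderiv ℝ ρ ζ (EuclideanSpace.single j Complex.I) : ℂ))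

/-!
Write `v = ζ - z`. The Wirtinger identity `2 Re Σⱼ ∂ρ/∂ζⱼ(ζ) vⱼ = dρ(ζ) v`, together with the
exact second-order Taylor expansion at `ζ` of the polynomial part of `ρ`, gives
`2 Re Φ = ρ(ζ) - ρ(z) + Σⱼ (λⱼ + 2·[j < q]) |vⱼ|² + (R(z) - R(ζ) - dR(ζ)(z - ζ))`, where
`λⱼ = 1` for `j ≥ q`.
Since `λⱼ ≥ -1`, every weight is at least `1`, so the middle sum is at least `|v|²`,
while `D²R(0) = 0` bounds the Taylor remainder of `R` by `|v|²/2` near the origin.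
Hence `|Φ| ≥ Re Φ ≥ ½(ρ(ζ) - ρ(z)) + ¼|v|²`.
-/

section Wirtinger

variable {n : ℕ}

theorem EuclideanSpace.sum_single {𝕜 ι : Type*} [RCLike 𝕜] [Fintype ι] [DecidableEq ι]
    (v : EuclideanSpace 𝕜 ι) : ∑ j, EuclideanSpace.single j (v j) = v := by
  ext i
  simp [WithLp.ofLp_sum, Finset.sum_apply]

theorem EuclideanSpace.single_eq_re_smul_add_im_smul {ι : Type*} [DecidableEq ι] (j : ι) (w : ℂ) :
    EuclideanSpace.single j w =
      w.re • EuclideanSpace.single j (1 : ℂ) + w.im • EuclideanSpace.single j I := by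
  ext i
  by_cases h : i = j <;> simp [h]

theorem two_mul_re_wderiv_mul (ρ : EuclideanSpace ℂ (Fin n) → ℝ)
    (ζ : EuclideanSpace ℂ (Fin n)) (j : Fin n) (w : ℂ) :
    2 * (wderiv n ρ ζ j * w).re = fderiv ℝ ρ ζ (EuclideanSpace.single j w) := by
  rw [EuclideanSpace.single_eq_re_smul_add_im_smul, map_add, map_smul, map_smul]
  simp only [wderiv, mul_re, mul_im, sub_re, sub_im, ofReal_re, ofReal_im, I_re, I_im, one_div,
    inv_re, inv_im, re_ofNat, im_ofNat, normSq_ofNat, smul_eq_mul]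
  ring

theorem two_mul_re_sum_wderiv_mul (ρ : EuclideanSpace ℂ (Fin n) → ℝ)
    (ζ v : EuclideanSpace ℂ (Fin n)) :
    2 * (∑ j, wderiv n ρ ζ j * v j).re = fderiv ℝ ρ ζ v := by
  conv_rhs => rw [← EuclideanSpace.sum_single v, map_sum]
  rw [re_sum, Finset.mul_sum]
  exact Finset.sum_congr rfl fun j _ => two_mul_re_wderiv_mul ρ ζ j (v j)

end Wirtinger

section ModelFunction

variable {n : ℕ}

open scoped RealInnerProductSpace

noncomputable def coordCLM (j : Fin n) : EuclideanSpace ℂ (Fin n) →L[ℝ] ℂ :=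
  (EuclideanSpace.proj j : EuclideanSpace ℂ (Fin n) →L[ℂ] ℂ).restrictScalars ℝ

@[simp]
theorem coordCLM_apply (j : Fin n) (z : EuclideanSpace ℂ (Fin n)) : coordCLM j z = z j :=
  rfl

theorem hasFDerivAt_norm_coord_sq (j : Fin n) (ζ : EuclideanSpace ℂ (Fin n)) :
    HasFDerivAt (fun z : EuclideanSpace ℂ (Fin n) => ‖z j‖ ^ 2)
      (2 • (innerSL ℝ (ζ j)).comp (coordCLM j)) ζ :=
  (coordCLM j).hasFDerivAt.norm_sq

theorem fderiv_model_apply_sub (k : Fin n) (a : Fin n → ℝ)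
    {R : EuclideanSpace ℂ (Fin n) → ℝ} {ρ : EuclideanSpace ℂ (Fin n) → ℝ}
    (hρ : ∀ z, ρ z = -(z k).im + ∑ j, a j * ‖z j‖ ^ 2 + R z)
    {ζ : EuclideanSpace ℂ (Fin n)} (hR : DifferentiableAt ℝ R ζ) (z : EuclideanSpace ℂ (Fin n)) :
    fderiv ℝ ρ ζ (ζ - z) =
      ρ ζ - ρ z + ∑ j, a j * ‖ζ j - z j‖ ^ 2 + (R z - R ζ - fderiv ℝ R ζ (z - ζ)) := by
  have hderiv : HasFDerivAt ρ
      (-(imCLM.comp (coordCLM k)) +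
        ∑ j, a j • (2 • (innerSL ℝ (ζ j)).comp (coordCLM j)) +
        fderiv ℝ R ζ) ζ := by
    rw [show ρ = _ from funext hρ]
    exact ((imCLM.comp (coordCLM k)).hasFDerivAt.neg.add
      (HasFDerivAt.fun_sum fun j _ => (hasFDerivAt_norm_coord_sq j ζ).const_mul (a j))).add
      hR.hasFDerivAt
  have hpolar : ∀ j, 2 * ⟪ζ j, ζ j - z j⟫ = ‖ζ j‖ ^ 2 - ‖z j‖ ^ 2 + ‖ζ j - z j‖ ^ 2 := by
    intro j
    have := norm_sub_sq_real (ζ j) (ζ j - z j)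
    rw [sub_sub_cancel] at this
    linarith
  rw [hderiv.fderiv, hρ ζ, hρ z, show z - ζ = -(ζ - z) by abel, map_neg]
  simp only [add_apply, neg_apply, sum_apply, smul_apply, ContinuousLinearMap.comp_apply,
    innerSL_apply_apply, imCLM_apply, smul_eq_mul, nsmul_eq_mul, Nat.cast_ofNat, coordCLM_apply,
    PiLp.sub_apply, hpolar, sub_im, mul_add, mul_sub, Finset.sum_add_distrib,
    Finset.sum_sub_distrib]
  ring

end ModelFunction

section TaylorRemainder

variable {E F : Type*} [NormedAddCommGroup E] [NormedSpace ℝ E] [NormedAddCommGroup F]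
  [NormedSpace ℝ F]

theorem Convex.norm_image_sub_sub_fderiv_le {f : E → F} {s : Set E} (hs : Convex ℝ s)
    (hf : ∀ x ∈ s, DifferentiableAt ℝ f x) (hf' : ∀ x ∈ s, DifferentiableAt ℝ (fderiv ℝ f) x)
    {C : ℝ} (hC : ∀ x ∈ s, ‖fderiv ℝ (fderiv ℝ f) x‖ ≤ C) {x y : E} (hx : x ∈ s) (hy : y ∈ s) :
    ‖f y - f x - fderiv ℝ f x (y - x)‖ ≤ C * ‖y - x‖ ^ 2 := by
  have hseg : segment ℝ x y ⊆ s := hs.segment_subset hx hy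
  have hC0 : 0 ≤ C := (norm_nonneg (fderiv ℝ (fderiv ℝ f) x)).trans (hC x hx)
  have hbound : ∀ w ∈ segment ℝ x y, ‖fderiv ℝ f w - fderiv ℝ f x‖ ≤ C * ‖y - x‖ := by
    intro w hw
    have hwx : ‖w - x‖ ≤ ‖y - x‖ := by
      have := dist_add_dist_of_mem_segment hw
      rw [← dist_eq_norm, ← dist_eq_norm, dist_comm w x, dist_comm y x]
      linarith [dist_nonneg (x := w) (y := y)]
    calc ‖fderiv ℝ f w - fderiv ℝ f x‖ ≤ C * ‖w - x‖ :=
          hs.norm_image_sub_le_of_norm_fderiv_le hf' hC hx (hseg hw)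
      _ ≤ C * ‖y - x‖ := by gcongr
  calc ‖f y - f x - fderiv ℝ f x (y - x)‖ ≤ C * ‖y - x‖ * ‖y - x‖ :=
        (convex_segment x y).norm_image_sub_le_of_norm_fderiv_le' (fun w hw => hf w (hseg hw))
          hbound (left_mem_segment ℝ x y) (right_mem_segment ℝ x y)
    _ = C * ‖y - x‖ ^ 2 := by ring

theorem fderiv_fderiv_eq_zero_of_iteratedFDeriv_two_eq_zero {f : E → F} {x : E}
    (h : iteratedFDeriv ℝ 2 f x = 0) : fderiv ℝ (fderiv ℝ f) x = 0 := by
  have : ‖fderiv ℝ (fderiv ℝ f) x‖ = 0 := by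
    rw [← norm_iteratedFDeriv_one, norm_iteratedFDeriv_fderiv, h, norm_zero]
  exact norm_eq_zero (E := E →L[ℝ] E →L[ℝ] F) |>.mp this

theorem exists_ball_norm_image_sub_sub_fderiv_le {f : E → F} (hf : ContDiff ℝ 2 f) {x₀ : E}
    (h2 : iteratedFDeriv ℝ 2 f x₀ = 0) {ε : ℝ} (hε : 0 < ε) :
    ∃ r > 0, ∀ x ∈ Metric.ball x₀ r, ∀ y ∈ Metric.ball x₀ r,
      ‖f y - f x - fderiv ℝ f x (y - x)‖ ≤ ε * ‖y - x‖ ^ 2 := by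
  have hf' : ContDiff ℝ 1 (fderiv ℝ f) := hf.fderiv_right (by norm_num)
  obtain ⟨r, hr, hsmall⟩ := Metric.continuousAt_iff.mp
    (hf'.continuous_fderiv one_ne_zero).continuousAt ε hε
  refine ⟨r, hr, fun x hx y hy => (convex_ball x₀ r).norm_image_sub_sub_fderiv_le
    (fun w _ => hf.differentiable (by norm_num) w)
    (fun w _ => hf'.differentiable one_ne_zero w) (fun w hw => ?_) hx hy⟩
  have := hsmall (Metric.mem_ball.mp hw)
  rw [fderiv_fderiv_eq_zero_of_iteratedFDeriv_two_eq_zero h2, dist_zero_right] at this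
  exact this.le

end TaylorRemainder

section LerayDenominator

variable {n : ℕ}

theorem two_mul_re_sum_leray_mul (m : ℕ) (ρ : EuclideanSpace ℂ (Fin n) → ℝ)
    (z ζ : EuclideanSpace ℂ (Fin n)) (g : Fin n → ℂ)
    (hg : ∀ j, g j = if (j : ℕ) < m then
      wderiv n ρ ζ j + (starRingEnd ℂ (ζ j) - starRingEnd ℂ (z j)) else wderiv n ρ ζ j) :
    2 * (∑ j, g j * (ζ j - z j)).re =
      fderiv ℝ ρ ζ (ζ - z) + 2 * ∑ j : Fin n, if (j : ℕ) < m then ‖ζ j - z j‖ ^ 2 else 0 := by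
  have hsplit : ∀ j, g j * (ζ j - z j) = wderiv n ρ ζ j * (ζ - z) j +
      ((if (j : ℕ) < m then ‖ζ j - z j‖ ^ 2 else 0 : ℝ) : ℂ) := by
    intro j
    rw [hg, PiLp.sub_apply]
    split_ifs
    · rw [← map_sub]
      push_cast
      rw [← conj_mul']
      ring
    · simp
  simp only [hsplit, Finset.sum_add_distrib, add_re, mul_add]
  rw [two_mul_re_sum_wderiv_mul, ← ofReal_sum, ofReal_re]

theorem sum_norm_sq_le_sum_weighted_norm_sq (m : ℕ) (lam : Fin n → ℝ)
    (hlam : ∀ j : Fin n, (j : ℕ) < m → -1 ≤ lam j) (v : Fin n → ℂ) :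
    ∑ j : Fin n, ‖v j‖ ^ 2 ≤ ∑ j : Fin n, (if (j : ℕ) < m then lam j else 1) * ‖v j‖ ^ 2 +
      2 * ∑ j : Fin n, if (j : ℕ) < m then ‖v j‖ ^ 2 else 0 := by
  rw [Finset.mul_sum, ← Finset.sum_add_distrib]
  refine Finset.sum_le_sum fun j _ => ?_
  split_ifs with hj
  · nlinarith [hlam j hj, sq_nonneg ‖v j‖]
  · simp

end LerayDenominator

/-- Coordinates are 0-indexed: `z_n` is `z ⟨n - 1, _⟩` and `j < q` reads `j < q - 1`. -/
theorem stmt5_general (n q : ℕ) (hn : 1 ≤ n)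
    (lam : Fin n → ℝ) (hlam : ∀ j : Fin n, (j : ℕ) < q - 1 → |lam j| ≤ 1)
    (R : EuclideanSpace ℂ (Fin n) → ℝ) (hR : ContDiff ℝ 2 R)
    (hR2 : iteratedFDeriv ℝ 2 R 0 = 0)
    (ρ : EuclideanSpace ℂ (Fin n) → ℝ)
    (hρ : ∀ z, ρ z = -(z ⟨n - 1, Nat.sub_lt hn Nat.one_pos⟩).im +
        ∑ j : Fin n, (if (j : ℕ) < q - 1 then lam j else 1) * ‖z j‖ ^ 2 + R z)
    (g : EuclideanSpace ℂ (Fin n) → EuclideanSpace ℂ (Fin n) → Fin n → ℂ)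
    (hg : ∀ z ζ j, g z ζ j =
        if (j : ℕ) < q - 1 then wderiv n ρ ζ j + (starRingEnd ℂ (ζ j) - starRingEnd ℂ (z j))
        else wderiv n ρ ζ j) :
    ∃ U ∈ nhds (0 : EuclideanSpace ℂ (Fin n)), ∀ z ∈ U, ∀ ζ ∈ U,
      ρ z ≤ 0 → 0 ≤ ρ ζ →
      (1 / 2) * (ρ ζ - ρ z) + (1 / 4) * ‖ζ - z‖ ^ 2 ≤
        ‖∑ j, g z ζ j * (ζ j - z j)‖ := by
  obtain ⟨r, hr, hremainder⟩ :=
    exists_ball_norm_image_sub_sub_fderiv_le hR hR2 (by norm_num : (0 : ℝ) < 1 / 2)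
  refine ⟨Metric.ball 0 r, Metric.ball_mem_nhds 0 hr, fun z hz ζ hζ _ _ => ?_⟩
  have hΦ := two_mul_re_sum_leray_mul (q - 1) ρ z ζ (g z ζ) (hg z ζ)
  have hdρ := fderiv_model_apply_sub _ _ hρ (hR.differentiable (by norm_num) ζ) z
  have hweights := sum_norm_sq_le_sum_weighted_norm_sq (q - 1) lam
    (fun j hj => neg_le_of_abs_le (hlam j hj)) (fun j => ζ j - z j)
  have hR_lower := neg_abs_le (R z - R ζ - fderiv ℝ R ζ (z - ζ))
  have hR_upper : |R z - R ζ - fderiv ℝ R ζ (z - ζ)| ≤ 1 / 2 * ‖ζ - z‖ ^ 2 := by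
    simpa [norm_sub_rev z ζ] using hremainder ζ hζ z hz
  have hnorm : ‖ζ - z‖ ^ 2 = ∑ j, ‖ζ j - z j‖ ^ 2 := by
    simp only [EuclideanSpace.norm_sq_eq, PiLp.sub_apply]
  linarith [re_le_norm (∑ j, g z ζ j * (ζ j - z j))]

/-- Lower bound for the Leray denominator `Φ` on the convex configuration
(a (3.24)-type consequence of (3.13)).  Coordinates are 0-indexed. -/
theorem stmt5 (n q : ℕ) (hn : 1 ≤ n) (hq1 : 1 ≤ q) (hqn : q ≤ n)
    (lam : Fin n → ℝ) (hlam : ∀ j : Fin n, (j : ℕ) < q - 1 → |lam j| ≤ 1)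
    (R : EuclideanSpace ℂ (Fin n) → ℝ) (hR : ContDiff ℝ 2 R)
    (hR0 : R 0 = 0) (hR1 : fderiv ℝ R 0 = 0) (hR2 : iteratedFDeriv ℝ 2 R 0 = 0)
    (ρ : EuclideanSpace ℂ (Fin n) → ℝ)
    (hρ : ∀ z, ρ z = -(z ⟨n - 1, Nat.sub_lt hn Nat.one_pos⟩).im +
        ∑ j : Fin n, (if (j : ℕ) < q - 1 then lam j else 1) * ‖z j‖ ^ 2 + R z)
    (g : EuclideanSpace ℂ (Fin n) → EuclideanSpace ℂ (Fin n) → Fin n → ℂ)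
    (hg : ∀ z ζ j, g z ζ j =
        if (j : ℕ) < q - 1 then wderiv n ρ ζ j + (starRingEnd ℂ (ζ j) - starRingEnd ℂ (z j))
        else wderiv n ρ ζ j) :
    ∃ U ∈ nhds (0 : EuclideanSpace ℂ (Fin n)), ∀ z ∈ U, ∀ ζ ∈ U,
      ρ z ≤ 0 → 0 ≤ ρ ζ →
      (1 / 2) * (ρ ζ - ρ z) + (1 / 4) * ‖ζ - z‖ ^ 2 ≤
        ‖∑ j, g z ζ j * (ζ j - z j)‖ :=
  stmt5_general n q hn lam hlam R hR hR2 ρ hρ g hg
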